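/- arXiv:2311.02473 — 2 statements merged into one kernel-verified Lean document; each statement's English description precedes it below -/
import Mathlib

section
/- Let T_c > 0, Δ ≥ 0, and d : [0, ∞) → ℝ with |d(s)| ≤ Δ for all s. If x : [0, ∞) → ℝ is an absolutely continuous solution of dx/dτ = -x(τ) + T_c·exp(-τ)·d(φ⁻¹(τ)) with x(0) = x₀, where φ⁻¹(τ) = T_c(1 - exp(-τ)), then |x(τ)| ≤ exp(-τ)(|x₀| + Δ·T_c·τ) for all τ ≥ 0, and consequently x(τ) → 0 as τ → ∞. -/
/-!
Multiplying by the integrating factor `exp τ` turns `x' = -x + g` into `(exp τ · x)' = exp τ · g`.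
Here `exp τ · g τ = T_c · d(φ⁻¹ τ)` is bounded by `Δ T_c`, so by the mean value inequality
`|exp τ · x τ - x₀| ≤ Δ T_c τ`; the exponential decay then beats the linear growth.
-/

open Real Filter Topology

theorem hasDerivAt_exp_mul_of_hasDerivAt_neg_add {x : ℝ → ℝ} {g : ℝ} {t : ℝ}
    (hx : HasDerivAt x (-x t + g) t) :
    HasDerivAt (fun s => exp s * x s) (exp t * g) t :=
  ((hasDerivAt_exp t).mul hx).congr_deriv (by ring)

theorem abs_le_exp_neg_mul_of_hasDerivAt_neg_add {x g : ℝ → ℝ} {K τ : ℝ}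
    (hode : ∀ t, 0 ≤ t → HasDerivAt x (-x t + g t) t)
    (hg : ∀ t, 0 ≤ t → |exp t * g t| ≤ K) (hτ : 0 ≤ τ) :
    |x τ| ≤ exp (-τ) * (|x 0| + K * τ) := by
  have hmvt : ‖exp τ * x τ - exp 0 * x 0‖ ≤ K * ‖τ - 0‖ :=
    (convex_Icc 0 τ).norm_image_sub_le_of_norm_hasDerivWithin_le
      (fun t ht => (hasDerivAt_exp_mul_of_hasDerivAt_neg_add (hode t ht.1)).hasDerivWithinAt)
      (fun t ht => hg t ht.1) (Set.left_mem_Icc.2 hτ) (Set.right_mem_Icc.2 hτ)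
  rw [exp_zero, one_mul, sub_zero, Real.norm_eq_abs, Real.norm_eq_abs, abs_of_nonneg hτ] at hmvt
  have hscaled : exp τ * |x τ| ≤ |x 0| + K * τ := by
    calc exp τ * |x τ| = |exp τ * x τ| := by rw [abs_mul, abs_of_pos (exp_pos τ)]
      _ ≤ |x 0| + K * τ := by linarith [abs_sub_abs_le_abs_sub (exp τ * x τ) (x 0)]
  calc |x τ| = exp (-τ) * (exp τ * |x τ|) := by rw [← mul_assoc, ← exp_add, neg_add_cancel, exp_zero, one_mul]
    _ ≤ exp (-τ) * (|x 0| + K * τ) := mul_le_mul_of_nonneg_left hscaled (exp_pos _).le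

theorem tendsto_exp_neg_mul_add_mul_atTop (a b : ℝ) :
    Tendsto (fun τ => exp (-τ) * (a + b * τ)) atTop (𝓝 0) := by
  have hconst := tendsto_exp_neg_atTop_nhds_zero.const_mul a
  have hlin := (tendsto_pow_mul_exp_neg_atTop_nhds_zero 1).const_mul b
  simp only [pow_one, mul_zero] at hconst hlin
  convert hconst.add hlin using 2 <;> ring

theorem abs_exp_mul_disturbance_le {Tc Δ t : ℝ} {d : ℝ → ℝ} (hTc : 0 < Tc)
    (hd : ∀ s, 0 ≤ s → |d s| ≤ Δ) (ht : 0 ≤ t) :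
    |exp t * (Tc * exp (-t) * d (Tc * (1 - exp (-t))))| ≤ Δ * Tc := by
  have harg : 0 ≤ Tc * (1 - exp (-t)) :=
    mul_nonneg hTc.le (sub_nonneg.2 (exp_le_one_iff.2 (neg_nonpos.2 ht)))
  have hcancel : exp t * (Tc * exp (-t) * d (Tc * (1 - exp (-t)))) = Tc * d (Tc * (1 - exp (-t))) := by
    rw [← mul_assoc, mul_left_comm, ← exp_add, add_neg_cancel, exp_zero, mul_one]
  rw [hcancel, abs_mul, abs_of_pos hTc, mul_comm Δ]
  exact mul_le_mul_of_nonneg_left (hd _ harg) hTc.le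

theorem stmt_2_general (Tc Δ x₀ : ℝ) (hTc : 0 < Tc)
    (d : ℝ → ℝ) (hd : ∀ s, 0 ≤ s → |d s| ≤ Δ)
    (x : ℝ → ℝ) (hx0 : x 0 = x₀)
    (hode : ∀ τ, 0 ≤ τ →
      HasDerivAt x (-x τ + Tc * Real.exp (-τ) * d (Tc * (1 - Real.exp (-τ)))) τ) :
    (∀ τ, 0 ≤ τ → |x τ| ≤ Real.exp (-τ) * (|x₀| + Δ * Tc * τ)) ∧
    Filter.Tendsto x Filter.atTop (nhds 0) := by
  have hbound : ∀ τ, 0 ≤ τ → |x τ| ≤ exp (-τ) * (|x₀| + Δ * Tc * τ) := fun τ hτ =>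
    hx0 ▸ abs_le_exp_neg_mul_of_hasDerivAt_neg_add hode
      (fun t ht => abs_exp_mul_disturbance_le hTc hd ht) hτ
  refine ⟨hbound, squeeze_zero_norm' ?_ (tendsto_exp_neg_mul_add_mul_atTop |x₀| (Δ * Tc))⟩
  filter_upwards [eventually_ge_atTop 0] with τ hτ
  exact hbound τ hτ

theorem stmt_2 (Tc Δ x₀ : ℝ) (hTc : 0 < Tc) (hΔ : 0 ≤ Δ)
    (d : ℝ → ℝ) (hd : ∀ s, 0 ≤ s → |d s| ≤ Δ)
    (x : ℝ → ℝ) (hx0 : x 0 = x₀)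
    (hode : ∀ τ, 0 ≤ τ →
      HasDerivAt x (-x τ + Tc * Real.exp (-τ) * d (Tc * (1 - Real.exp (-τ)))) τ) :
    (∀ τ, 0 ≤ τ → |x τ| ≤ Real.exp (-τ) * (|x₀| + Δ * Tc * τ)) ∧
    Filter.Tendsto x Filter.atTop (nhds 0) :=
  stmt_2_general Tc Δ x₀ hTc d hd x hx0 hode
end

section
/- Let T_f, T_c > 0 and w : [0, T_f] → ℝ be continuous. Define E(α) = ∫₀^{T_f} ((1 - exp(-α T_f))/(α T_c)) exp(ατ) w(τ) dτ for α > 0 and E(0) = (T_f/T_c)∫₀^{T_f} w(τ)dτ. Then E is differentiable at 0 with E'(0) = (T_f/T_c)∫₀^{T_f}(τ - T_f/2)·w(τ) dτ. -/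
/-!
Since `(1 - exp (-α Tf)) / α = ∫ t in -Tf..0, exp (α t)` for `α ≠ 0`, and this integral equals
`Tf` at `α = 0`, the function `E` is `Tc⁻¹` times the product of two Laplace-type integrals
`α ↦ ∫ exp (α t) f t` (with `f = 1` on `[-Tf, 0]` and `f = w` on `[0, Tf]`). Differentiating under
the integral sign, each has derivative `∫ t f t` at `0`, and the product rule gives
`Tc⁻¹ (-Tf² / 2 · ∫ w + Tf · ∫ τ w)`.
-/

open Real MeasureTheory intervalIntegral Set

theorem hasDerivAt_integral_exp_mul_zero {a b : ℝ} {f : ℝ → ℝ}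
    (hf : IntervalIntegrable f volume a b) :
    HasDerivAt (fun α => ∫ t in a..b, exp (α * t) * f t) (∫ t in a..b, t * f t) 0 := by
  set M := |a| + |b - a|
  have hbound : ∀ t ∈ uIoc a b, ∀ α ∈ Metric.ball (0 : ℝ) 1,
      ‖t * exp (α * t) * f t‖ ≤ M * exp M * |f t| := by
    intro t ht α hα
    have htM : |t| ≤ M := by
      linarith [abs_sub_left_of_mem_uIcc (uIoc_subset_uIcc ht), abs_sub_abs_le_abs_sub t a]
    have hα1 : |α| ≤ 1 := by simpa using (Metric.mem_ball.mp hα).le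
    have hexp : exp (α * t) ≤ exp M := exp_le_exp.mpr <| calc
      α * t ≤ |α| * |t| := (le_abs_self _).trans (abs_mul α t).le
      _ ≤ 1 * M := mul_le_mul hα1 htM (abs_nonneg t) zero_le_one
      _ = M := one_mul M
    rw [norm_mul, norm_mul, Real.norm_eq_abs, Real.norm_eq_abs, Real.norm_eq_abs, abs_exp]
    gcongr
  have key := hasDerivAt_integral_of_dominated_loc_of_deriv_le (μ := volume) (x₀ := (0 : ℝ))
    (F := fun α t => exp (α * t) * f t) (F' := fun α t => t * exp (α * t) * f t)
    (Metric.ball_mem_nhds 0 one_pos)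
    (Filter.Eventually.of_forall fun α =>
      (by fun_prop : Continuous fun t => exp (α * t)).aestronglyMeasurable.mul
        hf.def'.aestronglyMeasurable)
    (hf.continuousOn_mul (by fun_prop))
    ((by fun_prop : Continuous fun t => t * exp (0 * t)).aestronglyMeasurable.mul
        hf.def'.aestronglyMeasurable)
    (Filter.Eventually.of_forall hbound)
    (hf.norm.const_mul _)
    (Filter.Eventually.of_forall fun t _ α _ => by
      simpa [mul_comm, mul_left_comm, mul_assoc] using
        ((hasDerivAt_mul_const t).exp).mul_const (f t))
  simpa using key.2

theorem integral_exp_mul_neg_zero (T : ℝ) {α : ℝ} (hα : α ≠ 0) :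
    ∫ t in -T..0, exp (α * t) = (1 - exp (-α * T)) / α := by
  rw [integral_comp_mul_left (fun t => exp t) hα, integral_exp]
  simp [div_eq_inv_mul]

theorem hasDerivAt_integral_exp_mul_neg_zero (T : ℝ) :
    HasDerivAt (fun α => ∫ t in -T..0, exp (α * t)) (-T ^ 2 / 2) 0 := by
  have h := hasDerivAt_integral_exp_mul_zero (a := -T) (b := 0) (f := fun _ => (1 : ℝ))
    intervalIntegrable_const
  simp only [mul_one, integral_id] at h
  convert h using 1
  ring

theorem stmt_16_general (Tf Tc : ℝ) (hTf : 0 < Tf)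
    (w : ℝ → ℝ) (hw : ContinuousOn w (Set.Icc 0 Tf))
    (E : ℝ → ℝ)
    (hE : ∀ α : ℝ, E α =
      if α = 0 then (Tf / Tc) * ∫ τ in (0:ℝ)..Tf, w τ
      else ∫ τ in (0:ℝ)..Tf,
        ((1 - Real.exp (-α * Tf)) / (α * Tc)) * Real.exp (α * τ) * w τ) :
    HasDerivAt E ((Tf / Tc) * ∫ τ in (0:ℝ)..Tf, (τ - Tf / 2) * w τ) 0 := by
  have hw_int : IntervalIntegrable w volume 0 Tf :=
    (hw.mono (uIcc_of_le hTf.le).subset).intervalIntegrable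
  have hE_eq : E = fun α => Tc⁻¹ *
      ((∫ t in -Tf..0, exp (α * t)) * ∫ τ in (0:ℝ)..Tf, exp (α * τ) * w τ) := by
    funext α
    rw [hE α]
    split_ifs with hα
    · simp [hα, div_eq_inv_mul, mul_assoc]
    · simp only [mul_assoc, intervalIntegral.integral_const_mul, integral_exp_mul_neg_zero Tf hα]
      field_simp
  have hmoment : ∫ τ in (0:ℝ)..Tf, (τ - Tf / 2) * w τ
      = (∫ τ in (0:ℝ)..Tf, τ * w τ) - Tf / 2 * ∫ τ in (0:ℝ)..Tf, w τ := by
    have hτw : IntervalIntegrable (fun τ => τ * w τ) volume 0 Tf :=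
      hw_int.continuousOn_mul continuousOn_id
    simp only [sub_mul]
    rw [integral_sub hτw (hw_int.const_mul _), intervalIntegral.integral_const_mul]
  rw [hE_eq]
  refine (((hasDerivAt_integral_exp_mul_neg_zero Tf).mul
    (hasDerivAt_integral_exp_mul_zero hw_int)).const_mul Tc⁻¹).congr_deriv ?_
  simp only [zero_mul, exp_zero, one_mul, intervalIntegral.integral_const, smul_eq_mul, hmoment]
  ring

theorem stmt_16 (Tf Tc : ℝ) (hTf : 0 < Tf) (hTc : 0 < Tc)
    (w : ℝ → ℝ) (hw : ContinuousOn w (Set.Icc 0 Tf))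
    (E : ℝ → ℝ)
    (hE : ∀ α : ℝ, E α =
      if α = 0 then (Tf / Tc) * ∫ τ in (0:ℝ)..Tf, w τ
      else ∫ τ in (0:ℝ)..Tf,
        ((1 - Real.exp (-α * Tf)) / (α * Tc)) * Real.exp (α * τ) * w τ) :
    HasDerivAt E ((Tf / Tc) * ∫ τ in (0:ℝ)..Tf, (τ - Tf / 2) * w τ) 0 :=
  stmt_16_general Tf Tc hTf w hw E hE
end
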